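/- If X is an invertible n×n complex matrix that is not unitary and every column of X has unit Euclidean norm (∑_i |X_{ij}|² = 1 for all j), then there exists an index j such that the j-th column of X⁻¹ does not have unit norm, i.e., ∑_i |(X⁻¹)_{ij}|² ≠ 1. -/

import Mathlib

open Matrix

open scoped ComplexOrder

lemma trace_conjTranspose_mul_self {n : ℕ} (Y : Matrix (Fin n) (Fin n) ℂ)
    (hcol : ∀ j, ∑ i, ‖Y i j‖ ^ 2 = 1) :
    (Yᴴ * Y).trace = (n : ℂ) := by
  have inner : ∀ i j, (starRingEnd ℂ) (Y i j) * Y i j = ((‖Y i j‖ ^ 2 : ℝ) : ℂ) := by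
    intro i j
    rw [Complex.sq_norm, Complex.normSq_eq_conj_mul_self]
  have h1 : (Yᴴ * Y).trace = ∑ j, ∑ i, (starRingEnd ℂ) (Y i j) * Y i j := by
    simp [Matrix.trace, Matrix.diag, Matrix.mul_apply, Matrix.conjTranspose_apply]
  rw [h1]
  have h2 : ∀ j : Fin n, ∑ i, (starRingEnd ℂ) (Y i j) * Y i j = 1 := by
    intro j
    simp_rw [inner]
    rw [← Complex.ofReal_sum, hcol j, Complex.ofReal_one]
  simp [h2]

theorem stmt2 {n : ℕ} (X : Matrix (Fin n) (Fin n) ℂ) (hX : IsUnit X)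
    (hnotunitary : X⁻¹ ≠ Xᴴ)
    (hcol : ∀ j, ∑ i, ‖X i j‖ ^ 2 = 1) :
    ∃ j, ∑ i, ‖X⁻¹ i j‖ ^ 2 ≠ 1 := by
  by_contra h
  push_neg at h
  set A : Matrix (Fin n) (Fin n) ℂ := Xᴴ * X with hAdef
  have hA : A.IsHermitian := Matrix.isHermitian_conjTranspose_mul_self X
  have hAsd : A.PosSemidef := Matrix.posSemidef_conjTranspose_mul_self X
  set μ : Fin n → ℝ := hA.eigenvalues with hμ
  set U : Matrix (Fin n) (Fin n) ℂ := (hA.eigenvectorUnitary : Matrix (Fin n) (Fin n) ℂ)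
    with hU
  have hUU : star U * U = 1 := by
    simpa [hU] using (Matrix.mem_unitaryGroup_iff').mp hA.eigenvectorUnitary.2
  have hUU' : U * star U = 1 := by
    simpa [hU] using (Matrix.mem_unitaryGroup_iff).mp hA.eigenvectorUnitary.2
  have hspec : A = U * Matrix.diagonal (Complex.ofReal ∘ μ) * star U := hA.spectral_theorem
  -- det X is a unit, so all eigenvalues are nonzero
  have hdet : IsUnit X.det := (Matrix.isUnit_iff_isUnit_det X).mp hX
  have hdetA : A.det ≠ 0 := by
    rw [hAdef, Matrix.det_mul, Matrix.det_conjTranspose]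
    exact mul_ne_zero (star_ne_zero.mpr hdet.ne_zero) hdet.ne_zero
  have hprod : (∏ i, (μ i : ℂ)) ≠ 0 := hA.det_eq_prod_eigenvalues ▸ hdetA
  have hμne : ∀ i, μ i ≠ 0 := by
    intro i hi
    exact hprod (Finset.prod_eq_zero (Finset.mem_univ i) (by exact_mod_cast hi))
  have hμpos : ∀ i, 0 < μ i := fun i => lt_of_le_of_ne (hAsd.eigenvalues_nonneg i) (Ne.symm (hμne i))
  -- trace A = n
  have htrA : A.trace = (n : ℂ) := trace_conjTranspose_mul_self X hcol
  -- trace A⁻¹ = n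
  have hXinv : (X⁻¹)ᴴ = (Xᴴ)⁻¹ := Matrix.conjTranspose_nonsing_inv X
  have htrAinv : A⁻¹.trace = (n : ℂ) := by
    have h1 : ((X⁻¹)ᴴ * X⁻¹).trace = (n : ℂ) := trace_conjTranspose_mul_self X⁻¹ h
    have h2 : A⁻¹ = X⁻¹ * (X⁻¹)ᴴ := by
      rw [hAdef, Matrix.mul_inv_rev, hXinv]
    rw [h2, Matrix.trace_mul_comm, h1]
  -- trace A = sum of eigenvalues
  have htr_eq : A.trace = ∑ i, (μ i : ℂ) := by
    rw [hspec, Matrix.trace_mul_cycle, hUU, Matrix.one_mul, Matrix.trace_diagonal]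
    rfl
  -- A⁻¹ = U * diagonal (μ⁻¹) * star U
  have hAinv : A⁻¹ = U * Matrix.diagonal (fun i => ((μ i : ℂ))⁻¹) * star U := by
    apply Matrix.inv_eq_left_inv
    rw [hspec]
    calc (U * Matrix.diagonal (fun i => ((μ i : ℂ))⁻¹) * star U) *
        (U * Matrix.diagonal (Complex.ofReal ∘ μ) * star U)
        = U * (Matrix.diagonal (fun i => ((μ i : ℂ))⁻¹) * ((star U * U) *
            Matrix.diagonal (Complex.ofReal ∘ μ))) * star U := by
          simp only [Matrix.mul_assoc]
      _ = 1 := by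
          rw [hUU, Matrix.one_mul, Matrix.diagonal_mul_diagonal]
          have : (fun i => ((μ i : ℂ))⁻¹ * (Complex.ofReal ∘ μ) i) = fun _ => (1 : ℂ) := by
            funext i
            simp only [Function.comp_apply]
            exact inv_mul_cancel₀ (by exact_mod_cast hμne i)
          rw [this, Matrix.diagonal_one, Matrix.mul_one, hUU']
  have htrinv_eq : A⁻¹.trace = ∑ i, ((μ i : ℂ))⁻¹ := by
    rw [hAinv, Matrix.trace_mul_cycle, hUU, Matrix.one_mul, Matrix.trace_diagonal]
  -- real equations
  have hr1 : ∑ i, μ i = (n : ℝ) := by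
    have h0 := htr_eq.symm.trans htrA
    exact_mod_cast h0
  have hr2 : ∑ i, (μ i)⁻¹ = (n : ℝ) := by
    have h0 := htrinv_eq.symm.trans htrAinv
    have h1 : ((∑ i, (μ i)⁻¹ : ℝ) : ℂ) = (n : ℂ) := by push_cast; exact h0
    exact_mod_cast h1
  -- each eigenvalue equals 1
  have hsum0 : ∑ i, (μ i + (μ i)⁻¹ - 2) = 0 := by
    rw [Finset.sum_sub_distrib, Finset.sum_add_distrib, hr1, hr2]
    simp
    ring
  have hterm : ∀ i ∈ Finset.univ, 0 ≤ μ i + (μ i)⁻¹ - 2 := by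
    intro i _
    have hp := hμpos i
    have hinv : μ i * (μ i)⁻¹ = 1 := mul_inv_cancel₀ (hμne i)
    nlinarith [sq_nonneg (μ i - 1), inv_pos.mpr hp]
  have heach : ∀ i, μ i = 1 := by
    intro i
    have := (Finset.sum_eq_zero_iff_of_nonneg hterm).mp hsum0 i (Finset.mem_univ i)
    have hp := hμpos i
    have hinv : μ i * (μ i)⁻¹ = 1 := mul_inv_cancel₀ (hμne i)
    nlinarith [sq_nonneg (μ i - 1)]
  -- hence A = 1
  have hA1 : A = 1 := by
    rw [hspec]
    have : Matrix.diagonal (Complex.ofReal ∘ μ) = 1 := by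
      have : (Complex.ofReal ∘ μ) = fun _ => (1 : ℂ) := by
        funext i; simp [heach i]
      rw [this, Matrix.diagonal_one]
    rw [this, Matrix.mul_one, hUU']
  exact hnotunitary (Matrix.inv_eq_left_inv hA1)
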